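/- Let a, b, c, d be integers with ad − bc = ±1 and abcd ≠ 0, and suppose b is even. Let π be the group with presentation ⟨u, v, y | uyu⁻¹ = y⁻¹, v² = u^{2a} y^{b}, v u^{2c} y^{d} v⁻¹ = u^{−2c} y^{−d}⟩. Then the abelianization of π is isomorphic to ℤ/4|c|ℤ ⊕ ℤ/2ℤ ⊕ ℤ/2ℤ, and the images of u, v, y form a generating set whose images give a basis of H₁(π; 𝔽₂) ≅ (ℤ/2ℤ)³. -/

import Mathlib

/-!
In the abelianization the first relator says `y² = 1`; as `b` is even the second becomes
`v² = u^{2a}`, and the third becomes `(u^{2c} y^d)² = u^{4c} = 1`. Replacing `v` by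
`w = v u^{-a}` turns these into `u^{4c} = w² = y² = 1`, so `π^{ab}` is the direct product of
cyclic groups of orders `4|c|`, `2`, `2` generated by `u`, `w`, `y`. Every relator has even
exponent sum in each generator, so each generator has a dual character `π → ℤ/2`.
-/

/-- The relators of `π = ⟨u, v, y | uyu⁻¹ = y⁻¹, v² = u^{2a} y^{b},
v u^{2c} y^{d} v⁻¹ = u^{−2c} y^{−d}⟩`, with generators `u = 0`, `v = 1`, `y = 2`. -/
def solRels (a b c d : ℤ) : Set (FreeGroup (Fin 3)) :=
  { FreeGroup.of 0 * FreeGroup.of 2 * (FreeGroup.of 0)⁻¹ * FreeGroup.of 2,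
    ((FreeGroup.of 1) ^ 2)⁻¹ * (FreeGroup.of 0) ^ (2 * a) * (FreeGroup.of 2) ^ b,
    (FreeGroup.of 1 * ((FreeGroup.of 0) ^ (2 * c) * (FreeGroup.of 2) ^ d) *
        (FreeGroup.of 1)⁻¹) * ((FreeGroup.of 0) ^ (2 * c) * (FreeGroup.of 2) ^ d) }

theorem zpow_eq_one_of_sq_eq_one_of_even {G : Type*} [Group G] {x : G} (hx : x ^ 2 = 1)
    {n : ℤ} (hn : Even n) : x ^ n = 1 := by
  obtain ⟨k, rfl⟩ := hn
  rw [← two_mul, zpow_mul, zpow_ofNat, hx, one_zpow]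

theorem PresentedGroup.lift_of_eq_one_of_mem {α G : Type*} [Group G] {rels : Set (FreeGroup α)}
    (φ : PresentedGroup rels →* G) {r : FreeGroup α} (hr : r ∈ rels) :
    FreeGroup.lift (fun i ↦ φ (PresentedGroup.of i)) r = 1 := by
  have : FreeGroup.lift (fun i ↦ φ (PresentedGroup.of i)) = φ.comp (PresentedGroup.mk rels) :=
    FreeGroup.ext_hom _ _ fun _ ↦ FreeGroup.lift_apply_of
  rw [this, MonoidHom.comp_apply, PresentedGroup.one_of_mem hr, map_one]

theorem Multiplicative.zmod_two_sq_eq_one (x : Multiplicative (ZMod 2)) : x ^ 2 = 1 := by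
  revert x
  decide

@[ext]
theorem ZMod.addMonoidHom_ext {n : ℕ} {B : Type*} [AddGroup B] {f g : ZMod n →+ B}
    (h : f 1 = g 1) : f = g :=
  AddMonoidHom.ext fun x ↦ by
    obtain ⟨k, rfl⟩ := ZMod.intCast_surjective x
    rw [← zsmul_one, map_zsmul, map_zsmul, h]

@[ext]
theorem AddMonoidHom.prod_ext {M N P : Type*} [AddZeroClass M] [AddZeroClass N] [AddCommMonoid P]
    {f g : M × N →+ P} (h₁ : f.comp (inl M N) = g.comp (inl M N))
    (h₂ : f.comp (inr M N) = g.comp (inr M N)) : f = g := by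
  rw [← f.coprod_unique, ← g.coprod_unique, h₁, h₂]

section ZModLift

variable (n : ℕ) {G : Type*} [Group G] (x : G) (hx : x ^ n = 1)

def ZMod.liftOfPowEqOne : ZMod n →+ Additive G :=
  ZMod.lift n ⟨zmultiplesHom _ (Additive.ofMul x), by
    rw [zmultiplesHom_apply, natCast_zsmul, ← ofMul_pow, hx, ofMul_one]⟩

@[simp]
theorem ZMod.liftOfPowEqOne_intCast (k : ℤ) :
    ZMod.liftOfPowEqOne n x hx k = Additive.ofMul (x ^ k) := by
  rw [ZMod.liftOfPowEqOne, ZMod.lift_coe, zmultiplesHom_apply, ofMul_zpow]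

@[simp]
theorem ZMod.liftOfPowEqOne_one : ZMod.liftOfPowEqOne n x hx 1 = Additive.ofMul x := by
  rw [← Int.cast_one, ZMod.liftOfPowEqOne_intCast, zpow_one]

end ZModLift

section CommGroup

variable {A : Type*} [CommGroup A] {a b c d : ℤ}

theorem lift_solRels_eq_one_iff (hb : Even b) (f : Fin 3 → A) :
    (∀ r ∈ solRels a b c d, FreeGroup.lift f r = 1) ↔
      f 2 ^ 2 = 1 ∧ f 1 ^ 2 = f 0 ^ (2 * a) ∧ f 0 ^ (4 * c) = 1 := by
  simp only [solRels, Set.mem_insert_iff, Set.mem_singleton_iff, forall_eq_or_imp, forall_eq,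
    map_mul, map_inv, map_pow, map_zpow, FreeGroup.lift_apply_of, mul_inv_cancel_comm]
  rw [← sq]
  refine and_congr_right fun hy ↦ and_congr ?_ ?_
  · rw [zpow_eq_one_of_sq_eq_one_of_even hy hb, mul_one, inv_mul_eq_one, eq_comm]
  · rw [mul_mul_mul_comm, ← zpow_add, ← zpow_add,
      zpow_eq_one_of_sq_eq_one_of_even hy (.add_self d), mul_one, ← two_mul, ← mul_assoc]
    norm_num

theorem lift_solRels_eq_one_of_sq_eq_one (hb : Even b) (hA : ∀ x : A, x ^ 2 = 1)
    (f : Fin 3 → A) : ∀ r ∈ solRels a b c d, FreeGroup.lift f r = 1 := by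
  refine (lift_solRels_eq_one_iff hb f).2 ⟨hA _, ?_, ?_⟩
  · rw [hA, zpow_mul, zpow_ofNat, hA, one_zpow]
  · rw [show (4 : ℤ) * c = 2 * (2 * c) by ring, zpow_mul, zpow_ofNat, hA, one_zpow]

end CommGroup

section SolGroup

variable (a b c d : ℤ)

abbrev solGen (i : Fin 3) : Abelianization (PresentedGroup (solRels a b c d)) :=
  Abelianization.of (PresentedGroup.of i)

-- `v` goes to `a • u + w`, where `w = v u^{-a}` is the second basis vector.
open Multiplicative in
def solImage (n : ℕ) : Fin 3 → Multiplicative (ZMod n × ZMod 2 × ZMod 2) :=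
  ![ofAdd (1, 0, 0), ofAdd (a, 1, 0), ofAdd (0, 0, 1)]

variable {a b c d}

theorem solGen_relations (hb : Even b) :
    solGen a b c d 2 ^ 2 = 1 ∧ solGen a b c d 1 ^ 2 = solGen a b c d 0 ^ (2 * a) ∧
      solGen a b c d 0 ^ (4 * c) = 1 :=
  (lift_solRels_eq_one_iff hb _).1 fun _ ↦ PresentedGroup.lift_of_eq_one_of_mem Abelianization.of

theorem solGen_pow_eq_one (hb : Even b) :
    solGen a b c d 0 ^ (4 * c.natAbs) = 1 ∧
      (solGen a b c d 1 * solGen a b c d 0 ^ (-a)) ^ 2 = 1 ∧ solGen a b c d 2 ^ 2 = 1 := by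
  obtain ⟨hy, hv, hu⟩ := solGen_relations (a := a) (d := d) hb
  refine ⟨?_, ?_, hy⟩
  · rwa [← Int.natAbs_natCast 4, ← Int.natAbs_mul, pow_natAbs_eq_one, Nat.cast_ofNat]
  · rw [mul_pow, hv, ← zpow_natCast, ← zpow_mul, ← zpow_add, Nat.cast_ofNat, neg_mul, mul_comm,
      add_neg_cancel, zpow_zero]

theorem solImage_relations :
    solImage a (4 * c.natAbs) 2 ^ 2 = 1 ∧
      solImage a (4 * c.natAbs) 1 ^ 2 = solImage a (4 * c.natAbs) 0 ^ (2 * a) ∧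
      solImage a (4 * c.natAbs) 0 ^ (4 * c) = 1 := by
  have h4c : (4 : ZMod (4 * c.natAbs)) * c = 0 := by
    rw [← Int.cast_ofNat, ← Int.cast_mul, ZMod.intCast_zmod_eq_zero_iff_dvd, Nat.cast_mul,
      Int.natCast_natAbs]
    exact mul_dvd_mul_left _ (abs_dvd_self c)
  simpa [solImage, ← ofAdd_nsmul, ← ofAdd_zsmul, Prod.ext_iff, h4c]
    using (by decide : (2 : ZMod 2) = 0)

def solAbelianizationToProd (hb : Even b) :
    Abelianization (PresentedGroup (solRels a b c d)) →*
      Multiplicative (ZMod (4 * c.natAbs) × ZMod 2 × ZMod 2) :=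
  Abelianization.lift <| PresentedGroup.toGroup <|
    (lift_solRels_eq_one_iff hb _).2 solImage_relations

def solProdToAbelianization (hb : Even b) :
    Multiplicative (ZMod (4 * c.natAbs) × ZMod 2 × ZMod 2) →*
      Abelianization (PresentedGroup (solRels a b c d)) :=
  have h := solGen_pow_eq_one (a := a) (d := d) hb
  AddMonoidHom.toMultiplicativeLeft <|
    (ZMod.liftOfPowEqOne _ _ h.1).coprod <|
      (ZMod.liftOfPowEqOne _ _ h.2.1).coprod (ZMod.liftOfPowEqOne _ _ h.2.2)

def solAbelianizationEquiv (hb : Even b) :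
    Abelianization (PresentedGroup (solRels a b c d)) ≃*
      Multiplicative (ZMod (4 * c.natAbs) × ZMod 2 × ZMod 2) :=
  MonoidHom.toMulEquiv (solAbelianizationToProd hb) (solProdToAbelianization hb)
    (Abelianization.hom_ext _ _ <| PresentedGroup.ext fun i ↦ by
      fin_cases i <;> simp [solAbelianizationToProd, solProdToAbelianization, solImage])
    (by ext <;> simp [solAbelianizationToProd, solProdToAbelianization, solImage])

def solModTwoChar (hb : Even b) (j : Fin 3) :
    PresentedGroup (solRels a b c d) →* Multiplicative (ZMod 2) :=
  PresentedGroup.toGroup (lift_solRels_eq_one_of_sq_eq_one hb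
    Multiplicative.zmod_two_sq_eq_one (Pi.mulSingle j (Multiplicative.ofAdd 1)))

end SolGroup

theorem stmt18_general (a b c d : ℤ) (hb : Even b) :
    Nonempty (Abelianization (PresentedGroup (solRels a b c d)) ≃*
        Multiplicative (ZMod (4 * c.natAbs) × ZMod 2 × ZMod 2)) ∧
    ∃ φu φv φy : PresentedGroup (solRels a b c d) →* Multiplicative (ZMod 2),
      (φu (PresentedGroup.of 0) = Multiplicative.ofAdd 1 ∧
        φu (PresentedGroup.of 1) = Multiplicative.ofAdd 0 ∧
        φu (PresentedGroup.of 2) = Multiplicative.ofAdd 0) ∧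
      (φv (PresentedGroup.of 0) = Multiplicative.ofAdd 0 ∧
        φv (PresentedGroup.of 1) = Multiplicative.ofAdd 1 ∧
        φv (PresentedGroup.of 2) = Multiplicative.ofAdd 0) ∧
      (φy (PresentedGroup.of 0) = Multiplicative.ofAdd 0 ∧
        φy (PresentedGroup.of 1) = Multiplicative.ofAdd 0 ∧
        φy (PresentedGroup.of 2) = Multiplicative.ofAdd 1) :=
  ⟨⟨solAbelianizationEquiv hb⟩, solModTwoChar hb 0, solModTwoChar hb 1, solModTwoChar hb 2, by
    simp [solModTwoChar, PresentedGroup.toGroup.of]⟩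

/-- for `ad − bc = ±1`, `abcd ≠ 0` and `b` even, the abelianization of
`π = ⟨u, v, y | uyu⁻¹ = y⁻¹, v² = u^{2a}y^{b}, vu^{2c}y^{d}v⁻¹ = u^{−2c}y^{−d}⟩`
is `ℤ/4|c|ℤ ⊕ ℤ/2ℤ ⊕ ℤ/2ℤ`, and the images of `u, v, y` give a basis of
`H₁(π; 𝔽₂) ≅ (ℤ/2ℤ)³` (expressed by the existence of the dual homomorphisms
`φu, φv, φy : π → ℤ/2ℤ`). -/
theorem stmt18 (a b c d : ℤ)
    (hdet : a * d - b * c = 1 ∨ a * d - b * c = -1)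
    (h0 : a * b * c * d ≠ 0) (hb : Even b) :
    Nonempty (Abelianization (PresentedGroup (solRels a b c d)) ≃*
        Multiplicative (ZMod (4 * c.natAbs) × ZMod 2 × ZMod 2)) ∧
    ∃ φu φv φy : PresentedGroup (solRels a b c d) →* Multiplicative (ZMod 2),
      (φu (PresentedGroup.of 0) = Multiplicative.ofAdd 1 ∧
        φu (PresentedGroup.of 1) = Multiplicative.ofAdd 0 ∧
        φu (PresentedGroup.of 2) = Multiplicative.ofAdd 0) ∧
      (φv (PresentedGroup.of 0) = Multiplicative.ofAdd 0 ∧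
        φv (PresentedGroup.of 1) = Multiplicative.ofAdd 1 ∧
        φv (PresentedGroup.of 2) = Multiplicative.ofAdd 0) ∧
      (φy (PresentedGroup.of 0) = Multiplicative.ofAdd 0 ∧
        φy (PresentedGroup.of 1) = Multiplicative.ofAdd 0 ∧
        φy (PresentedGroup.of 2) = Multiplicative.ofAdd 1) :=
  stmt18_general a b c d hb
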